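/- Suppose κ : [0, τ₁] → ℝ is differentiable and satisfies the Riccati inequality -(κ + ε₂)² ≤ κ̇ ≤ -(κ - c₀ε₁)² + ε₂² with ε₂² = 2c₀ε₁, and κ(τ₀) > c₁ for some c₁ > 5√ε₂² at some τ₀ ∈ [0, τ₁). Then for all τ ∈ [τ₀, τ₁], 1/(κ(τ₀)^{-1} + (τ - τ₀)) - ε₃ ≤ κ(τ) ≤ 1/(κ(τ₀)^{-1} + (τ - τ₀)) + ε₃, where ε₃ = 2ε₂ + 2c₀ε₁. -/

import Mathlib

/-!
Both bounds come from comparing with the free-flight solution `(c⁻¹ + (τ - τ₀))⁻¹` of `u̇ = -u²`.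
Since `ε₂² = 2c₀ε₁`, the upper Riccati bound gives `(κ - ε₃)˙ ≤ -(κ - ε₃)²` wherever `κ > ε₃`,
and the lower one reads `(κ + ε₂)˙ ≥ -(κ + ε₂)²`. The comparison itself is a fencing argument
against the barriers `z · (c⁻¹ + (τ - τ₀))⁻¹`, which solve `u̇ = -u²/z` and are therefore strict
super- resp. subsolutions for `z > 1` resp. `z < 1`; letting `z → 1` gives the claim.
-/

open Set

theorem hasDerivAt_const_mul_inv_add_sub {s d a x : ℝ} (hs : s ≠ 0) (hx : d + (x - a) ≠ 0) :
    HasDerivAt (fun y => s * (d + (y - a))⁻¹) (-(s * (d + (x - a))⁻¹) ^ 2 / s) x := by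
  refine ((((hasDerivAt_id x).sub_const a).const_add d).inv hx |>.const_mul s).congr_deriv ?_
  simp only [id]
  field_simp

section Riccati

variable {f f' : ℝ → ℝ} {a b c : ℝ}

theorem inv_add_sub_pos (hc : 0 < c) {x : ℝ} (hx : a ≤ x) : 0 < c⁻¹ + (x - a) := by
  have := inv_pos.2 hc
  linarith

theorem riccati_le_inv_add_sub (hc : 0 < c) (hf : ContinuousOn f (Icc a b))
    (hf' : ∀ x ∈ Ico a b, HasDerivWithinAt f (f' x) (Ici x) x)
    (hriccati : ∀ x ∈ Ico a b, 0 < f x → f' x ≤ -f x ^ 2) (ha : f a ≤ c) :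
    ∀ x ∈ Icc a b, f x ≤ (c⁻¹ + (x - a))⁻¹ := by
  have hden : ∀ x ∈ Icc a b, 0 < c⁻¹ + (x - a) := fun x hx => inv_add_sub_pos hc hx.1
  intro x hx
  refine (le_iff_forall_one_lt_le_mul₀ (inv_pos.2 (hden x hx)).le).2 fun z hz => ?_
  have hz₀ : z ≠ 0 := by positivity
  have hB : ∀ y ∈ Icc a b, HasDerivAt (fun y => z * (c⁻¹ + (y - a))⁻¹)
      (-(z * (c⁻¹ + (y - a))⁻¹) ^ 2 / z) y := fun y hy =>
    hasDerivAt_const_mul_inv_add_sub hz₀ (hden y hy).ne'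
  rw [mul_comm]
  refine image_le_of_deriv_right_lt_deriv_boundary' hf hf' ?_
    (fun y hy => (hB y hy).continuousAt.continuousWithinAt)
    (fun y hy => (hB y (Ico_subset_Icc_self hy)).hasDerivWithinAt) ?_ hx
  · simp only [sub_self, add_zero, inv_inv]
    nlinarith
  · intro y hy hfy
    have hpos : 0 < z * (c⁻¹ + (y - a))⁻¹ :=
      mul_pos (by positivity) (inv_pos.2 (hden y (Ico_subset_Icc_self hy)))
    have hf'y := hriccati y hy (hfy ▸ hpos)
    rw [hfy] at hf'y
    rw [lt_div_iff₀ (by positivity)]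
    nlinarith [mul_pos (pow_pos hpos 2) (sub_pos.2 hz)]

theorem inv_add_sub_le_riccati (hc : 0 < c) (hf : ContinuousOn f (Icc a b))
    (hf' : ∀ x ∈ Ico a b, HasDerivWithinAt f (f' x) (Ici x) x)
    (hriccati : ∀ x ∈ Ico a b, -f x ^ 2 ≤ f' x) (ha : c ≤ f a) :
    ∀ x ∈ Icc a b, (c⁻¹ + (x - a))⁻¹ ≤ f x := by
  have hden : ∀ x ∈ Icc a b, 0 < c⁻¹ + (x - a) := fun x hx => inv_add_sub_pos hc hx.1
  intro x hx
  have hscaled : ∀ z > 1, z⁻¹ * (c⁻¹ + (x - a))⁻¹ ≤ f x := by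
    intro z hz
    have hz₀ : z⁻¹ ≠ 0 := by positivity
    have hB : ∀ y ∈ Icc a b, HasDerivAt (fun y => -(z⁻¹ * (c⁻¹ + (y - a))⁻¹))
        (-(-(z⁻¹ * (c⁻¹ + (y - a))⁻¹) ^ 2 / z⁻¹)) y := fun y hy =>
      (hasDerivAt_const_mul_inv_add_sub hz₀ (hden y hy).ne').neg
    refine neg_le_neg_iff.1 <| image_le_of_deriv_right_lt_deriv_boundary' (f := fun y => -f y)
      hf.neg (fun y hy => (hf' y hy).neg) ?_
      (fun y hy => (hB y hy).continuousAt.continuousWithinAt)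
      (fun y hy => (hB y (Ico_subset_Icc_self hy)).hasDerivWithinAt) ?_ hx
    · simp only [sub_self, add_zero, inv_inv, neg_le_neg_iff]
      nlinarith [inv_lt_one_of_one_lt₀ hz]
    · intro y hy hfy
      have hfy : f y = z⁻¹ * (c⁻¹ + (y - a))⁻¹ := neg_injective hfy
      have hpos : 0 < z⁻¹ * (c⁻¹ + (y - a))⁻¹ :=
        mul_pos (by positivity) (inv_pos.2 (hden y (Ico_subset_Icc_self hy)))
      have hf'y := hriccati y hy
      rw [hfy] at hf'y
      rw [div_inv_eq_mul]
      nlinarith [mul_pos (pow_pos hpos 2) (sub_pos.2 hz)]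
  have hf_nonneg : 0 ≤ f x :=
    le_trans (by have := hden x hx; positivity) (hscaled 2 one_lt_two)
  refine (le_iff_forall_one_lt_le_mul₀ hf_nonneg).2 fun z hz => ?_
  have := hscaled z hz
  rwa [inv_mul_le_iff₀ (by positivity), mul_comm] at this

end Riccati

theorem stmt_7_general (c₀ ε₁ ε₂ ε₃ τ₀ τ₁ c₁ : ℝ) (hc₀ : 0 < c₀) (hε₁ : 0 < ε₁)
    (hε₂ : ε₂ = Real.sqrt (2 * c₀ * ε₁)) (hε₃ : ε₃ = 2 * ε₂ + 2 * c₀ * ε₁)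
    (hτ₀ : 0 ≤ τ₀)
    (κ κ' : ℝ → ℝ)
    (hderiv : ∀ τ ∈ Set.Icc (0 : ℝ) τ₁, HasDerivAt κ (κ' τ) τ)
    (hlower : ∀ τ ∈ Set.Icc (0 : ℝ) τ₁, -(κ τ + ε₂) ^ 2 ≤ κ' τ)
    (hupper : ∀ τ ∈ Set.Icc (0 : ℝ) τ₁, κ' τ ≤ -(κ τ - c₀ * ε₁) ^ 2 + ε₂ ^ 2)
    (hc₁ : 5 * ε₂ < c₁) (hκτ₀ : c₁ < κ τ₀) :
    ∀ τ ∈ Set.Icc τ₀ τ₁,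
      1 / ((κ τ₀)⁻¹ + (τ - τ₀)) - ε₃ ≤ κ τ ∧
        κ τ ≤ 1 / ((κ τ₀)⁻¹ + (τ - τ₀)) + ε₃ := by
  have hm : 0 < c₀ * ε₁ := mul_pos hc₀ hε₁
  have hε₂_nonneg : 0 ≤ ε₂ := hε₂ ▸ Real.sqrt_nonneg _
  have hε₂_sq : ε₂ ^ 2 = 2 * c₀ * ε₁ := by rw [hε₂, Real.sq_sqrt (by positivity)]
  have hκτ₀_pos : 0 < κ τ₀ := by linarith
  have hsub : ∀ x ∈ Ico τ₀ τ₁, x ∈ Icc 0 τ₁ := fun x hx => ⟨hτ₀.trans hx.1, hx.2.le⟩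
  have hκ : ContinuousOn κ (Icc τ₀ τ₁) := fun x hx =>
    (hderiv x ⟨hτ₀.trans hx.1, hx.2⟩).continuousAt.continuousWithinAt
  have hκ' : ∀ x ∈ Ico τ₀ τ₁, HasDerivWithinAt κ (κ' x) (Ici x) x := fun x hx =>
    (hderiv x (hsub x hx)).hasDerivWithinAt
  intro τ hτ
  have upper := riccati_le_inv_add_sub (f := fun x => κ x - ε₃) hκτ₀_pos
    (hκ.sub continuousOn_const) (fun x hx => (hκ' x hx).sub_const ε₃)
    (fun x hx hpos => by nlinarith [hupper x (hsub x hx)]) (by linarith) τ hτ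
  have lower := inv_add_sub_le_riccati (f := fun x => κ x + ε₂) hκτ₀_pos
    (hκ.add continuousOn_const) (fun x hx => (hκ' x hx).add_const ε₂)
    (fun x hx => hlower x (hsub x hx)) (by linarith) τ hτ
  rw [one_div]
  constructor <;> linarith

/-- Riccati comparison for the wave-front curvature. If `κ` satisfies
`-(κ + ε₂)² ≤ κ̇ ≤ -(κ - c₀ε₁)² + ε₂²` on `[0, τ₁]` with `ε₂² = 2c₀ε₁`, and
`κ(τ₀) > c₁ > 5ε₂` at some `τ₀ ∈ [0, τ₁)`, then for all `τ ∈ [τ₀, τ₁]`,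
`1/(κ(τ₀)⁻¹ + (τ-τ₀)) - ε₃ ≤ κ(τ) ≤ 1/(κ(τ₀)⁻¹ + (τ-τ₀)) + ε₃` with `ε₃ = 2ε₂ + 2c₀ε₁`. -/
theorem stmt_7 (c₀ ε₁ ε₂ ε₃ τ₀ τ₁ c₁ : ℝ) (hc₀ : 0 < c₀) (hε₁ : 0 < ε₁)
    (hε₂ : ε₂ = Real.sqrt (2 * c₀ * ε₁)) (hε₃ : ε₃ = 2 * ε₂ + 2 * c₀ * ε₁)
    (hτ₀ : 0 ≤ τ₀) (hτ₀₁ : τ₀ < τ₁)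
    (κ κ' : ℝ → ℝ)
    (hderiv : ∀ τ ∈ Set.Icc (0 : ℝ) τ₁, HasDerivAt κ (κ' τ) τ)
    (hlower : ∀ τ ∈ Set.Icc (0 : ℝ) τ₁, -(κ τ + ε₂) ^ 2 ≤ κ' τ)
    (hupper : ∀ τ ∈ Set.Icc (0 : ℝ) τ₁, κ' τ ≤ -(κ τ - c₀ * ε₁) ^ 2 + ε₂ ^ 2)
    (hc₁ : 5 * ε₂ < c₁) (hκτ₀ : c₁ < κ τ₀) :
    ∀ τ ∈ Set.Icc τ₀ τ₁,
      1 / ((κ τ₀)⁻¹ + (τ - τ₀)) - ε₃ ≤ κ τ ∧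
        κ τ ≤ 1 / ((κ τ₀)⁻¹ + (τ - τ₀)) + ε₃ :=
  stmt_7_general c₀ ε₁ ε₂ ε₃ τ₀ τ₁ c₁ hc₀ hε₁ hε₂ hε₃ hτ₀ κ κ' hderiv hlower hupper hc₁ hκτ₀
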